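/- arXiv:2406.13452 — 3 statements merged into one kernel-verified Lean document; each statement's English description precedes it below -/
import Mathlib

section
/- Hypergraph immersion is transitive: if there exists an immersion of H in G and an immersion of G in F, then there exists an immersion of H in F. -/
/-- A hypergraph with vertex type `V` and hyperedge index type `E` (possibly infinite):
each hyperedge index is assigned its finite set of incident vertices. Multi-hyperedges are
allowed (distinct indices with the same incidence set). -/
structure Hypergraph' (V : Type) (E : Type) where
  inc : E → Finset V

namespace Hypergraph'

/-- The vertex set spanned by a set `S` of hyperedges of `G`. -/
def vertsOf {V E : Type} (G : Hypergraph' V E) (S : Finset E) : Set V :=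
  {v | ∃ f ∈ S, v ∈ G.inc f}

/-- The sub-hypergraph of `G` given by the hyperedge set `S` is connected: any two of its
vertices are joined by a Berge path within `S`. -/
def ConnectedOn {V E : Type} (G : Hypergraph' V E) (S : Finset E) : Prop :=
  ∀ u ∈ G.vertsOf S, ∀ v ∈ G.vertsOf S,
    Relation.ReflTransGen (fun a b => ∃ f ∈ S, a ∈ G.inc f ∧ b ∈ G.inc f) u v

end Hypergraph'

/-- An immersion of hypergraph `H` in hypergraph `G`: vertices map injectively to vertices,
and each hyperedge of `H` maps to a nonempty connected sub-hypergraph of `G` containing the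
images of its ends, with distinct hyperedges mapped to edge-disjoint sub-hypergraphs. -/
structure Immersion {V1 E1 V2 E2 : Type}
    (H : Hypergraph' V1 E1) (G : Hypergraph' V2 E2) where
  vmap : V1 → V2
  emap : E1 → Finset E2
  vinj : Function.Injective vmap
  nonempty : ∀ e, (emap e).Nonempty
  covers : ∀ e, ∀ v ∈ H.inc e, vmap v ∈ G.vertsOf (emap e)
  conn : ∀ e, G.ConnectedOn (emap e)
  disj : ∀ e1 e2, e1 ≠ e2 → Disjoint (emap e1) (emap e2)

/-- An embedding (topological-minor realization) of `H` in `G`: like an immersion, but the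
images of distinct hyperedges may share vertices only at images of shared endpoints
(rule (iii) of immersion replaced by `V(β(e1) ∩ β(e2)) = β(V(e1 ∩ e2))`). -/
structure GraphEmbedding {V1 E1 V2 E2 : Type}
    (H : Hypergraph' V1 E1) (G : Hypergraph' V2 E2) where
  vmap : V1 → V2
  emap : E1 → Finset E2
  vinj : Function.Injective vmap
  nonempty : ∀ e, (emap e).Nonempty
  covers : ∀ e, ∀ v ∈ H.inc e, vmap v ∈ G.vertsOf (emap e)
  conn : ∀ e, G.ConnectedOn (emap e)
  vdisj : ∀ e1 e2, e1 ≠ e2 → ∀ x,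
    (x ∈ G.vertsOf (emap e1) ∧ x ∈ G.vertsOf (emap e2)) ↔
      (∃ v, x = vmap v ∧ v ∈ H.inc e1 ∧ v ∈ H.inc e2)


/-! Compose the two immersions: send a hyperedge `e` of `H` to the union of the `β`-images of
the hyperedges in `α e`. A Berge path of `G` inside `α e` lifts, hyperedge by hyperedge, to a
walk in `F` through the connected images of those hyperedges, so the union is connected and
edge-disjointness is inherited. The one catch is a hyperedge of `G` with no ends: its image
may lie anywhere in `F`, so such hyperedges are discarded first, keeping a single one only
when `α e` has nothing else. -/

namespace Hypergraph'

variable {V E : Type} (G : Hypergraph' V E)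

def BergeAdj (S : Finset E) (a b : V) : Prop :=
  ∃ f ∈ S, a ∈ G.inc f ∧ b ∈ G.inc f

def nonemptyEdges (S : Finset E) : Finset E :=
  S.filter fun f => (G.inc f).Nonempty

instance (S : Finset E) : Std.Symm (G.BergeAdj S) :=
  ⟨fun _ _ ⟨f, hf, ha, hb⟩ => ⟨f, hf, hb, ha⟩⟩

variable {G}

theorem inc_nonempty_of_mem_nonemptyEdges {S : Finset E} {f : E} (hf : f ∈ G.nonemptyEdges S) :
    (G.inc f).Nonempty :=
  (Finset.mem_filter.1 hf).2

theorem nonemptyEdges_subset (S : Finset E) : G.nonemptyEdges S ⊆ S :=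
  Finset.filter_subset _ _

theorem bergeAdj_nonemptyEdges (S : Finset E) : G.BergeAdj (G.nonemptyEdges S) = G.BergeAdj S := by
  ext a b
  refine ⟨fun ⟨f, hf, ha, hb⟩ => ⟨f, nonemptyEdges_subset S hf, ha, hb⟩,
    fun ⟨f, hf, ha, hb⟩ => ⟨f, Finset.mem_filter.2 ⟨hf, a, ha⟩, ha, hb⟩⟩

theorem vertsOf_mono {S T : Finset E} (h : S ⊆ T) : G.vertsOf S ⊆ G.vertsOf T :=
  fun _ ⟨f, hf, hv⟩ => ⟨f, h hf, hv⟩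

theorem vertsOf_nonemptyEdges (S : Finset E) : G.vertsOf (G.nonemptyEdges S) = G.vertsOf S := by
  ext v
  exact ⟨fun ⟨f, hf, hv⟩ => ⟨f, nonemptyEdges_subset S hf, hv⟩,
    fun ⟨f, hf, hv⟩ => ⟨f, Finset.mem_filter.2 ⟨hf, v, hv⟩, hv⟩⟩

theorem vertsOf_eq_empty_of_nonemptyEdges_eq_empty {S : Finset E}
    (h : G.nonemptyEdges S = ∅) : G.vertsOf S = ∅ := by
  rw [← vertsOf_nonemptyEdges, h]
  ext v
  simp [vertsOf]

theorem ConnectedOn.nonemptyEdges {S : Finset E} (h : G.ConnectedOn S) :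
    G.ConnectedOn (G.nonemptyEdges S) := by
  intro u hu v hv
  rw [vertsOf_nonemptyEdges] at hu hv
  have huv : Relation.ReflTransGen (G.BergeAdj S) u v := h u hu v hv
  rwa [← bergeAdj_nonemptyEdges] at huv

end Hypergraph'

namespace Immersion

open Hypergraph'

variable {V1 E1 V2 E2 V3 E3 : Type}
  {H : Hypergraph' V1 E1} {G : Hypergraph' V2 E2} {F : Hypergraph' V3 E3} [DecidableEq E3]

section Image

variable (β : Immersion G F)

theorem mapsTo_vertsOf_biUnion (S : Finset E2) :
    Set.MapsTo β.vmap (G.vertsOf S) (F.vertsOf (S.biUnion β.emap)) := by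
  rintro v ⟨f, hf, hv⟩
  obtain ⟨g, hg, hvg⟩ := β.covers f v hv
  exact ⟨g, Finset.mem_biUnion.2 ⟨f, hf, hg⟩, hvg⟩

theorem reflTransGen_bergeAdj_of_mem_vertsOf {S : Finset E2} {f : E2} (hf : f ∈ S)
    {a b : V3} (ha : a ∈ F.vertsOf (β.emap f)) (hb : b ∈ F.vertsOf (β.emap f)) :
    Relation.ReflTransGen (F.BergeAdj (S.biUnion β.emap)) a b := by
  refine Relation.ReflTransGen.mono ?_ a b (β.conn f a ha b hb)
  rintro x y ⟨g, hg, hx, hy⟩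
  exact ⟨g, Finset.mem_biUnion.2 ⟨f, hf, hg⟩, hx, hy⟩

theorem reflTransGen_bergeAdj_map {S : Finset E2} {u v : V2}
    (h : Relation.ReflTransGen (G.BergeAdj S) u v) :
    Relation.ReflTransGen (F.BergeAdj (S.biUnion β.emap)) (β.vmap u) (β.vmap v) :=
  h.lift' β.vmap fun _ _ ⟨f, hf, ha, hb⟩ =>
    β.reflTransGen_bergeAdj_of_mem_vertsOf hf (β.covers f _ ha) (β.covers f _ hb)

/-- An `F`-vertex of the image is joined, inside the `β`-image of a single hyperedge `f`, to the
image of an end of `f`; this is where every hyperedge of `S` needs an end. -/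
theorem connectedOn_biUnion {S : Finset E2} (hS : G.ConnectedOn S)
    (hne : ∀ f ∈ S, (G.inc f).Nonempty) : F.ConnectedOn (S.biUnion β.emap) := by
  have toEnd : ∀ x ∈ F.vertsOf (S.biUnion β.emap), ∃ w ∈ G.vertsOf S,
      Relation.ReflTransGen (F.BergeAdj (S.biUnion β.emap)) x (β.vmap w) := by
    rintro x ⟨g, hg, hx⟩
    obtain ⟨f, hf, hgf⟩ := Finset.mem_biUnion.1 hg
    obtain ⟨w, hw⟩ := hne f hf
    exact ⟨w, ⟨f, hf, hw⟩,
      β.reflTransGen_bergeAdj_of_mem_vertsOf hf ⟨g, hgf, hx⟩ (β.covers f w hw)⟩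
  intro u hu v hv
  obtain ⟨wu, hwu, hu⟩ := toEnd u hu
  obtain ⟨wv, hwv, hv⟩ := toEnd v hv
  exact (hu.trans (β.reflTransGen_bergeAdj_map (hS wu hwu wv hwv))).trans
    (Std.Symm.symm _ _ hv)

theorem disjoint_biUnion {S T : Finset E2} (h : Disjoint S T) :
    Disjoint (S.biUnion β.emap) (T.biUnion β.emap) := by
  rw [Finset.disjoint_biUnion_left]
  intro f hf
  rw [Finset.disjoint_biUnion_right]
  intro g hg
  exact β.disj f g (fun hfg => Finset.disjoint_left.1 h hf (hfg ▸ hg))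

end Image

section Core

variable (α : Immersion H G)

noncomputable def core (e : E1) : Finset E2 :=
  if (G.nonemptyEdges (α.emap e)).Nonempty then G.nonemptyEdges (α.emap e)
  else {(α.nonempty e).choose}

theorem core_subset (e : E1) : α.core e ⊆ α.emap e := by
  unfold core
  split_ifs
  · exact nonemptyEdges_subset _
  · exact Finset.singleton_subset_iff.2 (α.nonempty e).choose_spec

theorem core_nonempty (e : E1) : (α.core e).Nonempty := by
  unfold core
  split_ifs with h
  · exact h
  · exact Finset.singleton_nonempty _

theorem vertsOf_core (e : E1) : G.vertsOf (α.core e) = G.vertsOf (α.emap e) := by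
  unfold core
  split_ifs with h
  · exact vertsOf_nonemptyEdges _
  · have hempty :=
      vertsOf_eq_empty_of_nonemptyEdges_eq_empty (Finset.not_nonempty_iff_eq_empty.1 h)
    rw [hempty, ← Set.subset_empty_iff, ← hempty]
    exact vertsOf_mono (Finset.singleton_subset_iff.2 (α.nonempty e).choose_spec)

theorem connectedOn_core_biUnion (β : Immersion G F) (e : E1) :
    F.ConnectedOn ((α.core e).biUnion β.emap) := by
  unfold core
  split_ifs
  · exact β.connectedOn_biUnion (α.conn e).nonemptyEdges
      fun _ => inc_nonempty_of_mem_nonemptyEdges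
  · rw [Finset.singleton_biUnion]
    exact β.conn _

end Core

noncomputable def comp (α : Immersion H G) (β : Immersion G F) : Immersion H F where
  vmap := β.vmap ∘ α.vmap
  emap e := (α.core e).biUnion β.emap
  vinj := β.vinj.comp α.vinj
  nonempty e := (α.core_nonempty e).biUnion fun f _ => β.nonempty f
  covers e v hv := β.mapsTo_vertsOf_biUnion _ (α.vertsOf_core e ▸ α.covers e v hv)
  conn := α.connectedOn_core_biUnion β
  disj e1 e2 hne :=
    β.disjoint_biUnion ((α.disj e1 e2 hne).mono (α.core_subset e1) (α.core_subset e2))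

end Immersion

/-- Hypergraph immersion is transitive: if `H` immerses in `G` and `G`
immerses in `F`, then `H` immerses in `F`. -/
theorem stmt3 {V1 E1 V2 E2 V3 E3 : Type}
    (H : Hypergraph' V1 E1) (G : Hypergraph' V2 E2) (F : Hypergraph' V3 E3)
    (h1 : Nonempty (Immersion H G)) (h2 : Nonempty (Immersion G F)) :
    Nonempty (Immersion H F) := by
  classical
  obtain ⟨α⟩ := h1
  obtain ⟨β⟩ := h2
  exact ⟨α.comp β⟩
end

section
/- The triangle K_3^2 can be immersed in a hypergraph G if and only if G contains a Berge cycle of length at least 3, or two edge-disjoint Berge cycles of length 2 sharing exactly one common vertex. -/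
/-- A finite hypergraph: a finite vertex set together with a finite multiset of
hyperedges (so multi-hyperedges are allowed), each hyperedge a subset of the vertex set. -/
structure MHypergraph (V : Type) where
  verts : Finset V
  edges : Multiset (Finset V)

/-- The vertex set spanned by a collection (multiset) of hyperedges. -/
def mVerts {V : Type} [DecidableEq V] (S : Multiset (Finset V)) : Finset V :=
  S.toFinset.sup id

/-- Reachability by a Berge path using only hyperedges from `S`. -/
def mReach {V : Type} (S : Multiset (Finset V)) (u v : V) : Prop :=
  Relation.ReflTransGen (fun a b => ∃ f ∈ S, a ∈ f ∧ b ∈ f) u v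

/-- A collection of hyperedges is connected if any two of its vertices are joined
by a Berge path within it. -/
def mConnected {V : Type} [DecidableEq V] (S : Multiset (Finset V)) : Prop :=
  ∀ u ∈ mVerts S, ∀ v ∈ mVerts S, mReach S u v

/-- An immersion of the hypergraph `H` in the hypergraph `G`: an injective map of
vertices together with an assignment (encoded by the multiset `P` of pairs) sending each
hyperedge of `H` to a nonempty connected sub-hypergraph of `G` containing the images of
its ends, such that distinct hyperedges of `H` are mapped to edge-disjoint sub-hypergraphs
(encoded by requiring that the multiset sum of all images is contained in `G.edges`). -/
def MImmersion {V1 V2 : Type} [DecidableEq V2]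
    (H : MHypergraph V1) (G : MHypergraph V2) : Prop :=
  ∃ (vmap : V1 → V2) (P : Multiset (Finset V1 × Multiset (Finset V2))),
    Set.MapsTo vmap ↑H.verts ↑G.verts ∧
    Set.InjOn vmap ↑H.verts ∧
    P.map Prod.fst = H.edges ∧
    (P.map Prod.snd).sum ≤ G.edges ∧
    ∀ p ∈ P, p.2 ≠ 0 ∧ mConnected p.2 ∧ ∀ v ∈ p.1, vmap v ∈ mVerts p.2

/-- `G'` is a subgraph of `G`: obtained by deleting vertices and/or hyperedges. -/
def IsSubgraph {V : Type} (G' G : MHypergraph V) : Prop :=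
  G'.verts ⊆ G.verts ∧ G'.edges ≤ G.edges

/-- Coalescence: merge two hyperedges sharing at least one vertex into their union. -/
def CoalStep {V : Type} [DecidableEq V] (G H : MHypergraph V) : Prop :=
  ∃ (e1 e2 : Finset V) (rest : Multiset (Finset V)),
    (e1 ∩ e2).Nonempty ∧ G.edges = e1 ::ₘ e2 ::ₘ rest ∧
    H.verts = G.verts ∧ H.edges = (e1 ∪ e2) ::ₘ rest

/-- Dewetting: detach one vertex from a hyperedge of size at least 2. -/
def DewetStep {V : Type} [DecidableEq V] (G H : MHypergraph V) : Prop :=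
  ∃ (e : Finset V) (v : V) (rest : Multiset (Finset V)),
    v ∈ e ∧ 2 ≤ e.card ∧ G.edges = e ::ₘ rest ∧
    H.verts = G.verts ∧ H.edges = (e.erase v) ::ₘ rest

/-- Hypergraph isomorphism: a bijection of vertex sets inducing a bijection of
hyperedge multisets. -/
def MIso {V1 V2 : Type} [DecidableEq V2] (G : MHypergraph V1) (H : MHypergraph V2) : Prop :=
  ∃ φ : V1 → V2, Set.BijOn φ ↑G.verts ↑H.verts ∧ H.edges = G.edges.map (Finset.image φ)

/-- A Berge-cycle pattern of length `t`: `t` distinct vertices `v i` and `t` hyperedges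
`e i` (taken as distinct copies) with `v i, v (i+1) ∈ e i`, indices mod `t`. -/
def CyclePattern {V : Type} (t : ℕ) (ht : 0 < t) (v : Fin t → V) (e : Fin t → Finset V) :
    Prop :=
  Function.Injective v ∧
  ∀ i : Fin t, v i ∈ e i ∧ v ⟨(↑i + 1) % t, Nat.mod_lt _ ht⟩ ∈ e i

/-- `G` contains a Berge cycle of length `t` (the requirement that the `t` hyperedges be
distinct copies in `G` is encoded by the multiset inclusion). -/
def HasBergeCycle {V : Type} (G : MHypergraph V) (t : ℕ) (ht : 0 < t) : Prop :=
  ∃ (v : Fin t → V) (e : Fin t → Finset V),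
    CyclePattern t ht v e ∧ Finset.univ.val.map e ≤ G.edges

/-- The triangle `K_3^2`. -/
def K32 : MHypergraph (Fin 3) :=
  ⟨Finset.univ, {({0, 1} : Finset (Fin 3)), {1, 2}, {0, 2}}⟩

/-!
Walk inside the three branch sub-hypergraphs of an immersion of `K_3^2`, shortcut the walks to
trails, and concatenate them: the result is a closed Berge trail through at least three distinct
vertices. If its vertices are all distinct it is a Berge cycle of length at least 3. Otherwise it
splits at a repeated vertex `x` into two shorter closed trails with disjoint hyperedges; by
induction either one of them yields the conclusion, or both have only two vertices, i.e. they are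
digons (Berge cycles of length 2) through `x`, meeting only in `x`.

Conversely, a Berge cycle `v₀ e₀ v₁ e₁ v₂ … v₀` immerses the triangle through the branches
`e₀`, `e₁` and `e₂ … e_{t-1}`; two digons `x y₁` and `x y₂` immerse it on `y₁, y₂, x` through
the branches `y₁ x y₂`, `y₂ x` and `x y₁`.
-/

theorem List.exists_eq_append_cons_append_cons_of_not_nodup_map {α β : Type*} {f : α → β}
    {l : List α} (h : ¬(l.map f).Nodup) :
    ∃ A p M q B, l = A ++ p :: M ++ q :: B ∧ f p = f q := by
  induction l with
  | nil => simp at h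
  | cons a l ih =>
    rw [List.map_cons, List.nodup_cons, not_and_or, not_not] at h
    rcases h with h | h
    · obtain ⟨b, hb, hfb⟩ := List.mem_map.1 h
      obtain ⟨M, B, rfl⟩ := List.append_of_mem hb
      exact ⟨[], a, M, b, B, rfl, hfb.symm⟩
    · obtain ⟨A, p, M, q, B, rfl, hpq⟩ := ih h
      exact ⟨a :: A, p, M, q, B, rfl, hpq⟩

theorem Multiset.exists_eq_cons_of_map_eq_cons {α β : Type*} {f : α → β} {s : Multiset α}
    {b : β} {t : Multiset β} (h : s.map f = b ::ₘ t) :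
    ∃ a s', s = a ::ₘ s' ∧ f a = b ∧ s'.map f = t := by
  classical
  obtain ⟨a, ha, hfa, ht⟩ := (Multiset.map_eq_cons f s t b).2 h
  exact ⟨a, s.erase a, (Multiset.cons_erase ha).symm, hfa, ht⟩

section Reach

variable {V : Type}

theorem mem_mVerts [DecidableEq V] {S : Multiset (Finset V)} {x : V} :
    x ∈ mVerts S ↔ ∃ f ∈ S, x ∈ f := by
  simp [mVerts]

theorem mReach.mono {S T : Multiset (Finset V)} (hST : S ≤ T) {u v : V} (h : mReach S u v) :
    mReach T u v :=
  Relation.ReflTransGen.mono (fun _ _ ⟨f, hf, ha, hb⟩ => ⟨f, Multiset.mem_of_le hST hf, ha, hb⟩)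
    _ _ h

theorem mReach.symm {S : Multiset (Finset V)} {u v : V} (h : mReach S u v) : mReach S v u := by
  induction h with
  | refl => exact .refl
  | tail _ hstep ih =>
    obtain ⟨f, hf, hb, hc⟩ := hstep
    exact .head ⟨f, hf, hc, hb⟩ ih

theorem mem_verts_of_mem_mVerts [DecidableEq V] {G : MHypergraph V}
    (hG : ∀ e ∈ G.edges, e ⊆ G.verts) {S : Multiset (Finset V)} (hS : S ≤ G.edges) {x : V}
    (hx : x ∈ mVerts S) : x ∈ G.verts := by
  obtain ⟨f, hf, hxf⟩ := mem_mVerts.1 hx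
  exact hG f (Multiset.mem_of_le hS hf) hxf

end Reach

/-- A Berge walk from `u` to `v`: the step `(x, f)` leaves `x` through the hyperedge `f`, and
consecutive vertices are distinct. Its hyperedges are `L.map Prod.snd`; it is a trail in `S`
when `↑(L.map Prod.snd) ≤ S`. -/
inductive IsBergeWalk {V : Type} : V → List (V × Finset V) → V → Prop
  | nil (u : V) : IsBergeWalk u [] u
  | cons {u w v : V} {f : Finset V} {L : List (V × Finset V)} :
      u ∈ f → w ∈ f → u ≠ w → IsBergeWalk w L v → IsBergeWalk u ((u, f) :: L) v

namespace IsBergeWalk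

variable {V : Type} {u v : V} {L : List (V × Finset V)}

theorem append_iff {A B : List (V × Finset V)} :
    IsBergeWalk u (A ++ B) v ↔ ∃ w, IsBergeWalk u A w ∧ IsBergeWalk w B v := by
  induction A generalizing u with
  | nil =>
    refine ⟨fun h => ⟨u, .nil u, h⟩, ?_⟩
    rintro ⟨w, ⟨⟩, hB⟩
    exact hB
  | cons p A ih =>
    constructor
    · rintro (_ | ⟨hu, hw, hne, h⟩)
      obtain ⟨w', hA, hB⟩ := ih.1 h
      exact ⟨w', .cons hu hw hne hA, hB⟩
    · rintro ⟨w', (_ | ⟨hu, hw, hne, hA⟩), hB⟩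
      exact .cons hu hw hne (ih.2 ⟨w', hA, hB⟩)

theorem ne_nil (h : IsBergeWalk u L v) (huv : u ≠ v) : L ≠ [] := by
  rintro rfl
  cases h
  exact huv rfl

theorem fst_eq_of_cons {p : V × Finset V} (h : IsBergeWalk u (p :: L) v) : p.1 = u := by
  cases h
  rfl

theorem mem_map_fst (h : IsBergeWalk u L v) (hL : L ≠ []) : u ∈ L.map Prod.fst := by
  cases h with
  | nil => exact absurd rfl hL
  | cons => exact List.mem_cons_self

theorem exists_of_mReach {S : Multiset (Finset V)} (h : mReach S u v) :
    ∃ L, IsBergeWalk u L v ∧ ∀ p ∈ L, p.2 ∈ S := by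
  induction h using Relation.ReflTransGen.head_induction_on with
  | refl => exact ⟨[], .nil _, by simp⟩
  | head hstep _ ih =>
    rename_i a c _
    obtain ⟨L, hL, hLS⟩ := ih
    obtain ⟨f, hf, haf, hcf⟩ := hstep
    by_cases hac : a = c
    · exact ⟨L, hac ▸ hL, hLS⟩
    · exact ⟨(a, f) :: L, .cons haf hcf hac hL, by simpa [hf] using hLS⟩

theorem exists_sublist_nodup (h : IsBergeWalk u L v) :
    ∃ L', L'.Sublist L ∧ IsBergeWalk u L' v ∧ (L'.map Prod.snd).Nodup := by
  induction hn : L.length using Nat.strong_induction_on generalizing L with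
  | _ n ih =>
  by_cases hnd : (L.map Prod.snd).Nodup
  · exact ⟨L, .refl L, h, hnd⟩
  obtain ⟨A, ⟨x, f⟩, M, ⟨y, g⟩, B, rfl, hfg⟩ :=
    List.exists_eq_append_cons_append_cons_of_not_nodup_map hnd
  obtain rfl : f = g := hfg
  obtain ⟨y', hAM, hB⟩ := append_iff.1 h
  obtain ⟨x', hA, hM⟩ := append_iff.1 hAM
  obtain rfl := hM.fst_eq_of_cons
  obtain rfl := hB.fst_eq_of_cons
  rcases hM with _ | ⟨hxf, -, -, -⟩
  rcases hB with _ | ⟨-, hzf, -, hB⟩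
  rename_i z
  -- `(x, f)` and `(y, f)` use the same hyperedge: go from `x` through `f` straight to the vertex
  -- `z` that follows `y`.
  have shorter : ∀ K, K.Sublist (A ++ (x, f) :: M ++ (y, f) :: B) → K.length < n →
      IsBergeWalk u K v → ∃ L', L'.Sublist (A ++ (x, f) :: M ++ (y, f) :: B) ∧
        IsBergeWalk u L' v ∧ (L'.map Prod.snd).Nodup := by
    intro K hK hlt hKw
    obtain ⟨L', hsub, hL'⟩ := ih _ hlt hKw rfl
    exact ⟨L', hsub.trans hK, hL'⟩
  have hB_sub : B.Sublist (M ++ (y, f) :: B) :=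
    (List.sublist_cons_self _ _).trans (List.sublist_append_right _ _)
  by_cases hxz : x = z
  · subst hxz
    exact shorter (A ++ B) (by simpa using hB_sub.cons _) (by grind)
      (append_iff.2 ⟨x, hA, hB⟩)
  · exact shorter (A ++ (x, f) :: B) (by simp [hB_sub]) (by grind)
      (append_iff.2 ⟨x, hA, .cons hxf hzf hxz hB⟩)

theorem exists_trail_of_mReach {S : Multiset (Finset V)} (h : mReach S u v) :
    ∃ L, IsBergeWalk u L v ∧ (L.map Prod.snd : Multiset (Finset V)) ≤ S := by
  obtain ⟨L, hL, hLS⟩ := exists_of_mReach h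
  obtain ⟨L', hsub, hL', hnd⟩ := hL.exists_sublist_nodup
  refine ⟨L', hL', (Multiset.le_iff_subset (Multiset.coe_nodup.2 hnd)).2 fun f hf => ?_⟩
  obtain ⟨p, hp, rfl⟩ := List.mem_map.1 (Multiset.mem_coe.1 hf)
  exact hLS p (hsub.subset hp)

theorem getElem_zero_vertices (h : IsBergeWalk u L v) :
    (L.map Prod.fst ++ [v])[0]'(by simp) = u := by
  cases h <;> rfl

theorem getElem_mem (h : IsBergeWalk u L v) (i : ℕ) (hi : i < L.length) :
    L[i].1 ∈ L[i].2 ∧ (L.map Prod.fst ++ [v])[i + 1]'(by simpa using hi) ∈ L[i].2 := by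
  induction h generalizing i with
  | nil => simp at hi
  | cons hu hw _ hL ih =>
    cases i with
    | zero =>
      rw [← hL.getElem_zero_vertices] at hw
      exact ⟨hu, by simpa using hw⟩
    | succ i => simpa using ih i (by simpa using hi)

theorem cyclePattern (h : IsBergeWalk u L u) (hnd : (L.map Prod.fst).Nodup)
    (hpos : 0 < L.length) :
    CyclePattern L.length hpos (fun i => L[(i : ℕ)].1) (fun i => L[(i : ℕ)].2) := by
  refine ⟨fun i j hij => Fin.ext ?_, fun i => ?_⟩
  · exact (hnd.getElem_inj_iff (hi := by simp) (hj := by simp)).1 (by simpa using hij)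
  obtain ⟨h1, h2⟩ := h.getElem_mem i i.2
  refine ⟨h1, ?_⟩
  have hnext : (L[((i : ℕ) + 1) % L.length]'(Nat.mod_lt _ hpos)).1 =
      (L.map Prod.fst ++ [u])[(i : ℕ) + 1]'(by simp) := by
    rcases Nat.lt_or_ge ((i : ℕ) + 1) L.length with hlt | hge
    · simp only [Nat.mod_eq_of_lt hlt]
      rw [List.getElem_append_left (by simpa using hlt), List.getElem_map]
    · have hi : (i : ℕ) + 1 = L.length := by omega
      have h0 := h.getElem_zero_vertices
      rw [List.getElem_append_left (by simpa using hpos)] at h0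
      simpa [hi] using h0
  rw [← hnext] at h2
  exact h2

theorem exists_split_of_not_nodup (h : IsBergeWalk u L u) (hnd : ¬(L.map Prod.fst).Nodup) :
    ∃ x C₁ C₂, C₁ ≠ [] ∧ C₂ ≠ [] ∧ IsBergeWalk x C₁ x ∧ IsBergeWalk x C₂ x ∧
      (C₁ ++ C₂).Perm L := by
  obtain ⟨A, ⟨x, f⟩, M, ⟨y, g⟩, B, rfl, hxy⟩ :=
    List.exists_eq_append_cons_append_cons_of_not_nodup_map hnd
  obtain rfl : x = y := hxy
  obtain ⟨x', hAM, hB⟩ := append_iff.1 h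
  obtain ⟨x'', hA, hM⟩ := append_iff.1 hAM
  obtain rfl := hB.fst_eq_of_cons
  obtain rfl := hM.fst_eq_of_cons
  refine ⟨x, (x, f) :: M, (x, g) :: B ++ A, by simp, by simp, hM, append_iff.2 ⟨u, hB, hA⟩, ?_⟩
  simpa using (List.perm_append_comm (l₁ := A) (l₂ := (x, f) :: M ++ (x, g) :: B)).symm

theorem hasBergeCycle {G : MHypergraph V} (h : IsBergeWalk u L u)
    (hnd : (L.map Prod.fst).Nodup) (hle : (L.map Prod.snd : Multiset (Finset V)) ≤ G.edges)
    (hpos : 0 < L.length) : HasBergeCycle G L.length hpos :=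
  ⟨_, _, h.cyclePattern hnd hpos,
    by rwa [Fin.univ_val_map, List.ofFn_getElem_eq_map L Prod.snd]⟩

variable [DecidableEq V]

theorem mReach_of_mem_mVerts (h : IsBergeWalk u L v) {y : V}
    (hy : y ∈ mVerts (L.map Prod.snd : Multiset (Finset V))) :
    mReach (L.map Prod.snd : Multiset (Finset V)) u y := by
  induction h with
  | nil => simp [mVerts] at hy
  | @cons u w v f L hu hw _ _ ih =>
    simp only [List.map_cons, ← Multiset.cons_coe, mem_mVerts, Multiset.mem_cons,
      exists_eq_or_imp] at hy
    rcases hy with hy | hy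
    · exact .single ⟨f, by simp, hu, hy⟩
    · exact .head ⟨f, by simp, hu, hw⟩
        ((ih (mem_mVerts.2 hy)).mono (Multiset.le_cons_self _ f))

theorem mConnected (h : IsBergeWalk u L v) :
    mConnected (L.map Prod.snd : Multiset (Finset V)) :=
  fun _ ha _ hb => (h.mReach_of_mem_mVerts ha).symm.trans (h.mReach_of_mem_mVerts hb)

theorem left_mem_mVerts (h : IsBergeWalk u L v) (hL : L ≠ []) :
    u ∈ mVerts (L.map Prod.snd : Multiset (Finset V)) := by
  cases h with
  | nil => exact absurd rfl hL
  | @cons _ _ _ f _ hu => exact mem_mVerts.2 ⟨f, by simp, hu⟩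

theorem right_mem_mVerts (h : IsBergeWalk u L v) (hL : L ≠ []) :
    v ∈ mVerts (L.map Prod.snd : Multiset (Finset V)) := by
  induction h with
  | nil => exact absurd rfl hL
  | @cons u w v f L _ hw _ hL' ih =>
    rcases eq_or_ne L [] with rfl | hne
    · cases hL'
      exact mem_mVerts.2 ⟨f, by simp, hw⟩
    · obtain ⟨g, hg, hvg⟩ := mem_mVerts.1 (ih hne)
      exact mem_mVerts.2 ⟨g, by simp_all, hvg⟩

theorem exists_cyclePattern_two (h : IsBergeWalk u L u) (hL : L ≠ [])
    (hcard : (L.map Prod.fst).toFinset.card ≤ 2) :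
    ∃ y e, CyclePattern 2 two_pos ![u, y] e ∧
      Finset.univ.val.map e ≤ (L.map Prod.snd : Multiset (Finset V)) ∧
      (L.map Prod.fst).toFinset = {u, y} := by
  cases h with
  | nil => exact absurd rfl hL
  | @cons _ y _ f₀ L hu₀ hy₀ huy h =>
  cases h with
  | nil => exact absurd rfl huy
  | @cons _ z _ f₁ R hy₁ hz₁ hyz h =>
  have hV : (((u, f₀) :: (y, f₁) :: R).map Prod.fst).toFinset = {u, y} := by
    refine (Finset.eq_of_subset_of_card_le (fun x hx => ?_) ?_).symm
    · simp only [Finset.mem_insert, Finset.mem_singleton] at hx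
      rcases hx with rfl | rfl <;> simp
    · rwa [Finset.card_pair huy]
  have hzu : z = u := by
    cases h with
    | nil => rfl
    | cons =>
      have hz : z ∈ ({u, y} : Finset V) := hV ▸ by simp
      simp only [Finset.mem_insert, Finset.mem_singleton] at hz
      exact hz.resolve_right (Ne.symm hyz)
  subst hzu
  refine ⟨y, ![f₀, f₁], ⟨?_, fun i => ?_⟩, ?_, hV⟩
  · intro i j hij
    fin_cases i <;> fin_cases j
    exacts [rfl, absurd hij huy, absurd hij.symm huy, rfl]
  · fin_cases i
    · exact ⟨hu₀, hy₀⟩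
    · exact ⟨hy₁, hz₁⟩
  · simpa [Fin.univ_val_map] using (((List.nil_sublist _).cons_cons _).cons_cons _).subperm

end IsBergeWalk

theorem isBergeWalk_ofFn {V : Type} {n : ℕ} (w : Fin (n + 1) → V) (g : Fin n → Finset V)
    (hmem : ∀ i : Fin n, w i.castSucc ∈ g i ∧ w i.succ ∈ g i)
    (hne : ∀ i : Fin n, w i.castSucc ≠ w i.succ) :
    IsBergeWalk (w 0) (List.ofFn fun i => (w i.castSucc, g i)) (w (Fin.last n)) := by
  induction n with
  | zero => exact .nil _
  | succ n ih =>
    rw [List.ofFn_succ]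
    have := ih (w ∘ Fin.succ) (g ∘ Fin.succ) (fun i => by simpa using hmem i.succ)
      (fun i => by simpa using hne i.succ)
    exact .cons (hmem 0).1 (hmem 0).2 (hne 0)
      (by simpa only [Function.comp_apply, Fin.succ_castSucc, Fin.succ_last] using this)

theorem CyclePattern.isBergeWalk {V : Type} {t : ℕ} {ht : 0 < t} {v : Fin t → V}
    {e : Fin t → Finset V} (hp : CyclePattern t ht v e) (h2 : 2 ≤ t) :
    IsBergeWalk (v ⟨0, ht⟩) (List.ofFn fun i => (v i, e i)) (v ⟨0, ht⟩) := by
  have hw := isBergeWalk_ofFn (fun j : Fin (t + 1) => v ⟨j % t, Nat.mod_lt _ ht⟩) e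
    (fun i => by simpa [Nat.mod_eq_of_lt i.2] using hp.2 i) (fun i hv => ?_)
  · simpa [Nat.mod_eq_of_lt] using hw
  · have := congrArg Fin.val (hp.1 hv)
    simp only [Fin.val_castSucc, Nat.mod_eq_of_lt i.2, Fin.val_succ] at this
    rcases Nat.lt_or_ge ((i : ℕ) + 1) t with hlt | hge
    · rw [Nat.mod_eq_of_lt hlt] at this; omega
    · rw [show (i : ℕ) + 1 = t by omega, Nat.mod_self] at this; omega

section Immersion

variable {V : Type} [DecidableEq V] {G : MHypergraph V}

theorem mImmersion_K32_of_walks (hG : ∀ e ∈ G.edges, e ⊆ G.verts) {a b c : V}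
    (hab : a ≠ b) (hbc : b ≠ c) (hca : c ≠ a) {L₁ L₂ L₃ : List (V × Finset V)}
    (h₁ : IsBergeWalk a L₁ b) (h₂ : IsBergeWalk b L₂ c) (h₃ : IsBergeWalk c L₃ a)
    (hle : (L₁.map Prod.snd : Multiset (Finset V)) + (L₂.map Prod.snd : Multiset (Finset V)) +
      (L₃.map Prod.snd : Multiset (Finset V)) ≤ G.edges) :
    MImmersion K32 G := by
  have hne₁ := h₁.ne_nil hab
  have hne₂ := h₂.ne_nil hbc
  have hne₃ := h₃.ne_nil hca
  have hle₁ : (L₁.map Prod.snd : Multiset (Finset V)) ≤ G.edges :=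
    (le_self_add.trans le_self_add).trans hle
  have hle₂ : (L₂.map Prod.snd : Multiset (Finset V)) ≤ G.edges :=
    (le_add_self.trans le_self_add).trans hle
  have hle₃ : (L₃.map Prod.snd : Multiset (Finset V)) ≤ G.edges := le_add_self.trans hle
  refine ⟨![a, b, c], {({0, 1}, (L₁.map Prod.snd : Multiset (Finset V))),
    ({1, 2}, (L₂.map Prod.snd : Multiset (Finset V))),
    ({0, 2}, (L₃.map Prod.snd : Multiset (Finset V)))}, ?_, ?_, rfl, ?_, ?_⟩
  · intro k _
    fin_cases k
    · exact mem_verts_of_mem_mVerts hG hle₁ (h₁.left_mem_mVerts hne₁)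
    · exact mem_verts_of_mem_mVerts hG hle₂ (h₂.left_mem_mVerts hne₂)
    · exact mem_verts_of_mem_mVerts hG hle₃ (h₃.left_mem_mVerts hne₃)
  · intro i _ j _ hij
    fin_cases i <;> fin_cases j <;> simp_all [eq_comm]
  · simpa [add_assoc] using hle
  · simp only [Multiset.insert_eq_cons, Multiset.mem_cons, Multiset.mem_singleton]
    rintro p (rfl | rfl | rfl)
    · exact ⟨by simpa using hne₁, h₁.mConnected, by
        simpa using ⟨h₁.left_mem_mVerts hne₁, h₁.right_mem_mVerts hne₁⟩⟩
    · exact ⟨by simpa using hne₂, h₂.mConnected, by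
        simpa using ⟨h₂.left_mem_mVerts hne₂, h₂.right_mem_mVerts hne₂⟩⟩
    · exact ⟨by simpa using hne₃, h₃.mConnected, by
        simpa using ⟨h₃.right_mem_mVerts hne₃, h₃.left_mem_mVerts hne₃⟩⟩

theorem mReach_of_mImmersion_branch {vmap : Fin 3 → V}
    {p : Finset (Fin 3) × Multiset (Finset V)}
    (hp : p.2 ≠ 0 ∧ mConnected p.2 ∧ ∀ x ∈ p.1, vmap x ∈ mVerts p.2) {i j : Fin 3}
    (hpij : p.1 = {i, j}) : mReach p.2 (vmap i) (vmap j) :=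
  hp.2.1 _ (hp.2.2 i (by simp [hpij])) _ (hp.2.2 j (by simp [hpij]))

theorem exists_closed_trail_of_mImmersion_K32 (h : MImmersion K32 G) :
    ∃ (u : V) (L : List (V × Finset V)), IsBergeWalk u L u ∧
      (L.map Prod.snd : Multiset (Finset V)) ≤ G.edges ∧
      3 ≤ (L.map Prod.fst).toFinset.card := by
  obtain ⟨vmap, P, -, hinj, hfst, hsum, hP⟩ := h
  replace hfst : P.map Prod.fst = {0, 1} ::ₘ {1, 2} ::ₘ {0, 2} ::ₘ 0 := hfst
  obtain ⟨p₁, P, rfl, hp₁, hfst⟩ := Multiset.exists_eq_cons_of_map_eq_cons hfst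
  obtain ⟨p₂, P, rfl, hp₂, hfst⟩ := Multiset.exists_eq_cons_of_map_eq_cons hfst
  obtain ⟨p₃, P, rfl, hp₃, -⟩ := Multiset.exists_eq_cons_of_map_eq_cons hfst
  obtain ⟨L₁, h₁, hle₁⟩ :=
    IsBergeWalk.exists_trail_of_mReach (mReach_of_mImmersion_branch (hP p₁ (by simp)) hp₁)
  obtain ⟨L₂, h₂, hle₂⟩ :=
    IsBergeWalk.exists_trail_of_mReach (mReach_of_mImmersion_branch (hP p₂ (by simp)) hp₂)
  obtain ⟨L₃, h₃, hle₃⟩ := IsBergeWalk.exists_trail_of_mReach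
    (mReach_of_mImmersion_branch (hP p₃ (by simp)) (hp₃.trans (Finset.pair_comm _ _)))
  have hinj' : Function.Injective vmap := fun i j hij => hinj (by simp [K32]) (by simp [K32]) hij
  have h01 : vmap 0 ≠ vmap 1 := hinj'.ne (by decide)
  have h12 : vmap 1 ≠ vmap 2 := hinj'.ne (by decide)
  have h20 : vmap 2 ≠ vmap 0 := hinj'.ne (by decide)
  refine ⟨vmap 0, L₁ ++ L₂ ++ L₃, ?_, ?_, ?_⟩
  · exact IsBergeWalk.append_iff.2 ⟨_, IsBergeWalk.append_iff.2 ⟨_, h₁, h₂⟩, h₃⟩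
  · refine le_trans ?_ hsum
    simp only [List.map_append, ← Multiset.coe_add, Multiset.map_cons, Multiset.sum_cons,
      ← add_assoc]
    exact (add_le_add (add_le_add hle₁ hle₂) hle₃).trans le_self_add
  · have hsub :
        ({vmap 0, vmap 1, vmap 2} : Finset V) ⊆ ((L₁ ++ L₂ ++ L₃).map Prod.fst).toFinset := by
      simp only [List.map_append, List.toFinset_append, Finset.insert_subset_iff,
        Finset.singleton_subset_iff, Finset.mem_union, List.mem_toFinset]
      exact ⟨.inl (.inl (h₁.mem_map_fst (h₁.ne_nil h01))),
        .inl (.inr (h₂.mem_map_fst (h₂.ne_nil h12))), .inr (h₃.mem_map_fst (h₃.ne_nil h20))⟩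
    exact (Finset.card_eq_three.2 ⟨_, _, _, h01, h20.symm, h12, rfl⟩).symm.le.trans
      (Finset.card_le_card hsub)

end Immersion

theorem CyclePattern.mem_of_two {V : Type} {v : Fin 2 → V} {e : Fin 2 → Finset V}
    (hp : CyclePattern 2 two_pos v e) (i j : Fin 2) : v i ∈ e j := by
  fin_cases i <;> fin_cases j
  exacts [(hp.2 0).1, (hp.2 1).2, (hp.2 0).2, (hp.2 1).1]

section Dichotomy

variable {V : Type} [DecidableEq V] {G : MHypergraph V}

def HasLongBergeCycle (G : MHypergraph V) : Prop :=
  ∃ t : ℕ, ∃ ht : 3 ≤ t, HasBergeCycle G t (Nat.zero_lt_of_lt ht)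

def HasDigonPairSharingOneVertex (G : MHypergraph V) : Prop :=
  ∃ (v₁ v₂ : Fin 2 → V) (e₁ e₂ : Fin 2 → Finset V),
    CyclePattern 2 two_pos v₁ e₁ ∧ CyclePattern 2 two_pos v₂ e₂ ∧
    Finset.univ.val.map e₁ + Finset.univ.val.map e₂ ≤ G.edges ∧
    ∃! x : V, x ∈ Set.range v₁ ∧ x ∈ Set.range v₂

theorem mImmersion_K32_of_hasLongBergeCycle (hG : ∀ e ∈ G.edges, e ⊆ G.verts)
    (h : HasLongBergeCycle G) : MImmersion K32 G := by
  obtain ⟨t, ht, v, e, hp, hle⟩ := h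
  obtain ⟨m, rfl⟩ : ∃ m, t = m + 3 := ⟨t - 3, by omega⟩
  have hw := hp.isBergeWalk (by omega)
  rw [List.ofFn_succ, List.ofFn_succ] at hw
  rcases hw with _ | ⟨h₀, h₀', h01, hw⟩
  rcases hw with _ | ⟨h₁, h₁', h12, hw⟩
  have hw₂ := hw
  rw [List.ofFn_succ] at hw₂
  obtain rfl := hw₂.fst_eq_of_cons
  refine mImmersion_K32_of_walks hG h01 h12 (hp.1.ne (Fin.succ_ne_zero _))
    (.cons h₀ h₀' h01 (.nil _)) (.cons h₁ h₁' h12 (.nil _)) hw ?_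
  convert hle using 1
  simp [Fin.univ_val_map, List.ofFn_succ, List.map_ofFn, Function.comp_def]

theorem mImmersion_K32_of_hasDigonPairSharingOneVertex (hG : ∀ e ∈ G.edges, e ⊆ G.verts)
    (h : HasDigonPairSharingOneVertex G) : MImmersion K32 G := by
  obtain ⟨v₁, v₂, e₁, e₂, hp₁, hp₂, hle, x, ⟨⟨i, rfl⟩, ⟨j, hj⟩⟩, huniq⟩ := h
  have hne : ∀ k : Fin 2, k ≠ k.rev := by decide
  have hx₁ : v₁ i ≠ v₁ i.rev := hp₁.1.ne (hne i)
  have hx₂ : v₂ j ≠ v₂ j.rev := hp₂.1.ne (hne j)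
  rw [hj] at hx₂
  have hy : v₁ i.rev ≠ v₂ j.rev := fun hy => hx₁ (huniq _ ⟨⟨_, rfl⟩, ⟨_, hy.symm⟩⟩).symm
  have hm₂ : ∀ k, v₁ i ∈ e₂ k := fun k => hj ▸ hp₂.mem_of_two j k
  refine mImmersion_K32_of_walks hG hy hx₂.symm hx₁
    (.cons (hp₁.mem_of_two _ 0) (hp₁.mem_of_two i 0) hx₁.symm
      (.cons (hm₂ 0) (hp₂.mem_of_two _ 0) hx₂ (.nil _)))
    (.cons (hp₂.mem_of_two _ 1) (hm₂ 1) hx₂.symm (.nil _))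
    (.cons (hp₁.mem_of_two _ 1) (hp₁.mem_of_two _ 1) hx₁ (.nil _)) ?_
  convert hle using 1
  simp only [Fin.univ_val_map, List.ofFn_succ, List.ofFn_zero, List.map_cons, List.map_nil,
    ← Multiset.cons_coe,
    ← Multiset.singleton_add, Multiset.coe_nil, add_zero, Fin.succ_zero_eq_one]
  abel

theorem IsBergeWalk.hasLongBergeCycle_or_hasDigonPairSharingOneVertex {u : V}
    {L : List (V × Finset V)} (h : IsBergeWalk u L u)
    (hle : (L.map Prod.snd : Multiset (Finset V)) ≤ G.edges)
    (h3 : 3 ≤ (L.map Prod.fst).toFinset.card) :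
    HasLongBergeCycle G ∨ HasDigonPairSharingOneVertex G := by
  induction hn : L.length using Nat.strong_induction_on generalizing u L with
  | _ n ih =>
  by_cases hnd : (L.map Prod.fst).Nodup
  · have h3' : 3 ≤ L.length := h3.trans ((List.toFinset_card_le _).trans (by simp))
    exact .inl ⟨L.length, h3', h.hasBergeCycle hnd hle _⟩
  obtain ⟨x, C₁, C₂, hne₁, hne₂, hC₁, hC₂, hperm⟩ := h.exists_split_of_not_nodup hnd
  have hle' : (C₁.map Prod.snd : Multiset (Finset V)) + (C₂.map Prod.snd : Multiset (Finset V)) ≤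
      G.edges := by
    rwa [Multiset.coe_add, ← List.map_append, Multiset.coe_eq_coe.2 (hperm.map _)]
  have hV : (L.map Prod.fst).toFinset =
      (C₁.map Prod.fst).toFinset ∪ (C₂.map Prod.fst).toFinset := by
    rw [← List.toFinset_append, ← List.map_append]
    exact List.toFinset_eq_of_perm _ _ (hperm.map _).symm
  have hlen : C₁.length + C₂.length = n := by simpa [← hn] using hperm.length_eq
  have hpos₁ := List.length_pos_iff.2 hne₁
  have hpos₂ := List.length_pos_iff.2 hne₂
  by_cases h₁ : 3 ≤ (C₁.map Prod.fst).toFinset.card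
  · exact ih _ (by omega) hC₁ (le_self_add.trans hle') h₁ rfl
  by_cases h₂ : 3 ≤ (C₂.map Prod.fst).toFinset.card
  · exact ih _ (by omega) hC₂ (le_add_self.trans hle') h₂ rfl
  obtain ⟨y₁, e₁, hp₁, hle₁, hV₁⟩ := hC₁.exists_cyclePattern_two hne₁ (by omega)
  obtain ⟨y₂, e₂, hp₂, hle₂, hV₂⟩ := hC₂.exists_cyclePattern_two hne₂ (by omega)
  have hy : y₁ ≠ y₂ := by
    rintro rfl
    rw [hV, hV₁, hV₂, Finset.union_self] at h3
    exact absurd (h3.trans Finset.card_le_two) (by norm_num)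
  refine .inr ⟨![x, y₁], ![x, y₂], e₁, e₂, hp₁, hp₂, (add_le_add hle₁ hle₂).trans hle', x,
    by simp, ?_⟩
  rintro z ⟨hz₁, hz₂⟩
  simp only [Set.mem_range, Fin.exists_fin_two, Matrix.cons_val_zero, Matrix.cons_val_one]
    at hz₁ hz₂
  grind

end Dichotomy

/-- `K_3^2` can be immersed in `G` iff `G` contains a Berge cycle of
length at least 3, or two edge-disjoint Berge cycles of length 2 sharing exactly one
common vertex. -/
theorem stmt8 {V : Type} [DecidableEq V] (G : MHypergraph V)
    (hG : ∀ e ∈ G.edges, e ⊆ G.verts) :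
    MImmersion K32 G ↔
      ((∃ t : ℕ, ∃ ht : 3 ≤ t, HasBergeCycle G t (by omega)) ∨
        (∃ (v1 v2 : Fin 2 → V) (e1 e2 : Fin 2 → Finset V),
          CyclePattern 2 (by omega) v1 e1 ∧ CyclePattern 2 (by omega) v2 e2 ∧
          Finset.univ.val.map e1 + Finset.univ.val.map e2 ≤ G.edges ∧
          (∃! x : V, x ∈ Set.range v1 ∧ x ∈ Set.range v2))) := by
  show MImmersion K32 G ↔ HasLongBergeCycle G ∨ HasDigonPairSharingOneVertex G
  refine ⟨fun h => ?_, ?_⟩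
  · obtain ⟨u, L, hL, hle, h3⟩ := exists_closed_trail_of_mImmersion_K32 h
    exact hL.hasLongBergeCycle_or_hasDigonPairSharingOneVertex hle h3
  · rintro (h | h)
    exacts [mImmersion_K32_of_hasLongBergeCycle hG h,
      mImmersion_K32_of_hasDigonPairSharingOneVertex hG h]
end

section
/- There is no immersion of K_4^2 in K_4^3, and there is no immersion of K_4^3 in K_4^2; hence hypergraph immersion is a partial order but not a total order on hypergraph topologies. -/
/-- `K_4^2`: the complete graph on 4 vertices. -/
def K42 : MHypergraph (Fin 4) :=
  ⟨Finset.univ,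
    {({0, 1} : Finset (Fin 4)), {0, 2}, {0, 3}, {1, 2}, {1, 3}, {2, 3}}⟩

/-- `K_4^3`: the complete 3-uniform hypergraph on 4 vertices. -/
def K43 : MHypergraph (Fin 4) :=
  ⟨Finset.univ, {({0, 1, 2} : Finset (Fin 4)), {0, 1, 3}, {0, 2, 3}, {1, 2, 3}}⟩

lemma mVerts_card_le {S : Multiset (Finset (Fin 4))} (hS : S ≤ K42.edges) :
    (mVerts S).card ≤ 2 * Multiset.card S := by
  have h1 : (mVerts S).card ≤ ∑ f ∈ S.toFinset, (id f).card := by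
    rw [mVerts, Finset.sup_eq_biUnion]
    exact Finset.card_biUnion_le
  have h2 : ∑ f ∈ S.toFinset, (id f).card ≤ ∑ _f ∈ S.toFinset, 2 := by
    apply Finset.sum_le_sum
    intro f hf
    have hfK : f ∈ K42.edges := Multiset.mem_of_le hS (Multiset.mem_toFinset.mp hf)
    fin_cases hfK <;> decide
  have h3 : S.toFinset.card ≤ Multiset.card S := Multiset.toFinset_card_le S
  calc (mVerts S).card ≤ _ := h1
    _ ≤ _ := h2
    _ = 2 * S.toFinset.card := by rw [Finset.sum_const, smul_eq_mul, Nat.mul_comm]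
    _ ≤ 2 * Multiset.card S := by omega

/-- There is no immersion of `K_4^2` in `K_4^3` and no immersion of
`K_4^3` in `K_4^2`: immersion is a partial order but not a total order. -/
theorem stmt9 : ¬ MImmersion K42 K43 ∧ ¬ MImmersion K43 K42 := by
  constructor
  · rintro ⟨vmap, P, _, _, hfst, hsum, hall⟩
    have hPcard : Multiset.card P = 6 := by
      have := congrArg Multiset.card hfst
      simpa [K42] using this
    have h1 : ∀ x ∈ P.map (fun p => Multiset.card p.2), 1 ≤ x := by
      intro x hx
      rw [Multiset.mem_map] at hx
      obtain ⟨p, hp, rfl⟩ := hx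
      exact Multiset.card_pos.mpr (hall p hp).1
    have hle := Multiset.card_nsmul_le_sum h1
    have hmm : (P.map (fun p => Multiset.card p.2)).sum
        = Multiset.card (P.map Prod.snd).sum := by
      rw [show (P.map Prod.snd).sum = (P.map Prod.snd).join from rfl,
        Multiset.card_join, Multiset.map_map]; rfl
    have hc4 : Multiset.card (P.map Prod.snd).sum ≤ 4 :=
      le_trans (Multiset.card_le_card hsum) (by decide)
    simp [Multiset.card_map, hPcard, hmm, smul_eq_mul] at hle
    omega
  · rintro ⟨vmap, P, _, hinj, hfst, hsum, hall⟩
    have hPcard : Multiset.card P = 4 := by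
      have := congrArg Multiset.card hfst
      simpa [K43] using this
    have h1 : ∀ x ∈ P.map (fun p => Multiset.card p.2), 2 ≤ x := by
      intro x hx
      rw [Multiset.mem_map] at hx
      obtain ⟨p, hp, rfl⟩ := hx
      have hp1 : p.1 ∈ K43.edges := hfst ▸ Multiset.mem_map_of_mem Prod.fst hp
      have hcard1 : p.1.card = 3 := by
        simp only [K43, Multiset.insert_eq_cons, Multiset.mem_cons,
          Multiset.mem_singleton] at hp1
        rcases hp1 with h | h | h | h <;> rw [h] <;> decide
      have hsub : p.1.image vmap ⊆ mVerts p.2 :=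
        Finset.image_subset_iff.mpr (hall p hp).2.2
      have himg : (p.1.image vmap).card = 3 := by
        rw [Finset.card_image_of_injOn (hinj.mono (by simp [K43])), hcard1]
      have hle3 : 3 ≤ (mVerts p.2).card := himg ▸ Finset.card_le_card hsub
      have hsle : p.2 ≤ K42.edges :=
        le_trans (Multiset.le_sum_of_mem (Multiset.mem_map_of_mem Prod.snd hp)) hsum
      have := mVerts_card_le hsle
      omega
    have hle := Multiset.card_nsmul_le_sum h1
    have hmm : (P.map (fun p => Multiset.card p.2)).sum
        = Multiset.card (P.map Prod.snd).sum := by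
      rw [show (P.map Prod.snd).sum = (P.map Prod.snd).join from rfl,
        Multiset.card_join, Multiset.map_map]; rfl
    have hc6 : Multiset.card (P.map Prod.snd).sum ≤ 6 :=
      le_trans (Multiset.card_le_card hsum) (by decide)
    simp [Multiset.card_map, hPcard, hmm, smul_eq_mul] at hle
    omega
end
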